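/- In any labelled box configuration corresponding to a T-invariant submodule of M/O_C, two labelled type III boxes whose weights differ by a standard basis vector e_i must carry the same label in P^1. Consequently, on each path-connected component of the set L of labelled type III boxes, the label is constant. -/

import Mathlib

/-!
Shared combinatorial model of the T-module `M/O_{C_μ}`:
for each weight `w ∈ ℤ³`, the fiber of `M` at `w` has one basis vector for each
coordinate cylinder `Cyl_i` (determined by the partitions `μ i`) containing `w`, and
`O_C ⊆ M` is generated by `(1,1,1)`.
-/

open scoped Classical

noncomputable section

/-- The weight lattice `ℤ³`. -/
abbrev W3 := Fin 3 → ℤ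

/-- The standard basis vector `e_j`. -/
def eW (j : Fin 3) : W3 := fun i => if i = j then 1 else 0

variable (μ : Fin 3 → YoungDiagram)

/-- `w` lies in the cylinder `Cyl_i` along the `x_i`-axis with cross-section `μ i`. -/
def inCyl (i : Fin 3) (w : W3) : Prop :=
  0 ≤ w (i + 1) ∧ 0 ≤ w (i + 2) ∧ ((w (i + 1)).toNat, (w (i + 2)).toNat) ∈ μ i

/-- The fiber of `M` at weight `w`: one copy of `ℂ` for each cylinder containing `w`. -/
abbrev VF (w : W3) : Type := {i : Fin 3 // inCyl μ i w} → ℂ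

/-- Number of cylinders containing `w`. -/
def numCyl (w : W3) : ℕ := Nat.card {i : Fin 3 // inCyl μ i w}

/-- `w` has all coordinates nonnegative. -/
def nonnegW (w : W3) : Prop := ∀ i, 0 ≤ w i

/-- The vector `(1,1,1)_w`. -/
def constV (w : W3) : VF μ w := fun _ => 1

/-- The fiber of `O_C ⊆ M` at weight `w`: the line spanned by `(1,1,1)_w` for
nonnegative `w`, and `0` otherwise. -/
def ocSub (w : W3) : Submodule ℂ (VF μ w) :=
  if nonnegW w then Submodule.span ℂ {constV μ w} else ⊥

/-- Multiplication by `x_j` on fibers, `M_w → M_{w+e_j}`: the component in `Cyl_i`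
survives exactly when both `w` and `w + e_j` lie in `Cyl_i`. -/
def mapV (j : Fin 3) (w : W3) : VF μ w →ₗ[ℂ] VF μ (w + eW j) where
  toFun f k := if h : inCyl μ k.1 w then f ⟨k.1, h⟩ else 0
  map_add' f g := by
    funext k; by_cases h : inCyl μ k.1 w <;> simp [h]
  map_smul' c f := by
    funext k; by_cases h : inCyl μ k.1 w <;> simp [h]

/-- A family of subspaces of the fibers is closed under multiplication by the `x_j`:
this is the condition of being a T-invariant `ℂ[x₁,x₂,x₃]`-submodule of `M`. -/
def MultClosed (S : ∀ w : W3, Submodule ℂ (VF μ w)) : Prop :=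
  ∀ (w : W3) (j : Fin 3), (S w).map (mapV μ j w) ≤ S (w + eW j)

/-- The family contains `O_C`. -/
def ContainsOC (S : ∀ w : W3, Submodule ℂ (VF μ w)) : Prop :=
  ∀ w : W3, ocSub μ w ≤ S w

/-- The family agrees with `O_C` away from finitely many weights (finitely generated
quotient). -/
def FiniteSupp (S : ∀ w : W3, Submodule ℂ (VF μ w)) : Prop :=
  {w : W3 | S w ≠ ocSub μ w}.Finite

/-- weight types -/
def typeIminus (w : W3) : Prop := (∃ i, inCyl μ i w) ∧ ¬ nonnegW w

def typeII (w : W3) : Prop := nonnegW w ∧ numCyl μ w = 2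

def typeIII (w : W3) : Prop := nonnegW w ∧ numCyl μ w = 3

/-- The configuration supports a box at `w` exactly when `S w` is strictly larger
than the fiber of `O_C`. -/
def SupportsBox (S : ∀ w : W3, Submodule ℂ (VF μ w)) (w : W3) : Prop :=
  S w ≠ ocSub μ w

/-- The line `ℂ · i_w` in the fiber. -/
def lineI (w : W3) (i : Fin 3) : Submodule ℂ (VF μ w) :=
  Submodule.span ℂ {fun k => if k.1 = i then 1 else 0}

/-- A type III box at `w` labelled by the 1-dimensional subspace `ℂ · i_w`. -/
def labelledBy (S : ∀ w : W3, Submodule ℂ (VF μ w)) (w : W3) (i : Fin 3) : Prop :=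
  typeIII μ w ∧ S w = ocSub μ w ⊔ lineI μ w i


/-!
STATEMENT 11: in a labelled box configuration corresponding to a T-invariant
submodule of `M/O_C`, two labelled type III boxes whose weights differ by a standard
basis vector carry the same label in ℙ¹; consequently the label is constant along any
path of labelled type III boxes.

At a type III weight all three cylinders contain `w`, so the fiber is canonically
`Fin 3 → ℂ`; "the label of the box at `w`" is encoded by the subspace
`label S w ⊆ (Fin 3 → ℂ)` obtained by pulling back `S w` along this identification
(for a labelled box, a 2-dimensional space spanned by `(1,1,1)` and the label line).
-/

/-- The canonical map `(Fin 3 → ℂ) → VF w` (an isomorphism at type III weights). -/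
def stdMap (w : W3) : (Fin 3 → ℂ) →ₗ[ℂ] VF μ w where
  toFun g k := g k.1
  map_add' f g := rfl
  map_smul' c f := rfl

/-- The subspace of `Fin 3 → ℂ` encoding the box (and its label) at `w`. -/
def label (S : ∀ w : W3, Submodule ℂ (VF μ w)) (w : W3) : Submodule ℂ (Fin 3 → ℂ) :=
  Submodule.comap (stdMap μ w) (S w)

/-!
At a type III weight `w` the fibre is canonically `ℂ³`, and multiplication by `x_j` out of it
keeps every component, i.e. sends `g ∈ ℂ³` at `w` to `g` at `w + e_j`. Closure under multiplication therefore makes the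
label space at `w` a subspace of the one at `w + e_j`; both being planes, they coincide, and
along a path the label is propagated one step at a time.
-/

lemma inCyl_of_typeIII {w : W3} (hw : typeIII μ w) (i : Fin 3) : inCyl μ i w := by
  by_contra hi
  have hcard := Fintype.card_subtype_lt (p := fun i => inCyl μ i w) hi
  have h3 : numCyl μ w = 3 := hw.2
  rw [numCyl, Nat.card_eq_fintype_card] at h3
  simp [h3] at hcard

def stdEquiv (w : W3) (hw : ∀ i, inCyl μ i w) : (Fin 3 → ℂ) ≃ₗ[ℂ] VF μ w :=
  { stdMap μ w with
    invFun := fun f i => f ⟨i, hw i⟩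
    left_inv := fun _ => rfl
    right_inv := fun _ => rfl }

lemma finrank_label {S : ∀ w : W3, Submodule ℂ (VF μ w)} {w : W3} (hw : ∀ i, inCyl μ i w) :
    Module.finrank ℂ (label μ S w) = Module.finrank ℂ (S w) := by
  have hlabel : label μ S w = (S w).map (stdEquiv μ w hw).symm.toLinearMap :=
    Submodule.comap_equiv_eq_map_symm (stdEquiv μ w hw) (S w)
  rw [hlabel, LinearEquiv.finrank_map_eq]

lemma mapV_comp_stdMap {w : W3} (hw : ∀ i, inCyl μ i w) (j : Fin 3) :
    mapV μ j w ∘ₗ stdMap μ w = stdMap μ (w + eW j) := by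
  ext g k
  simp [mapV, stdMap, hw]

lemma label_le_label_add {S : ∀ w : W3, Submodule ℂ (VF μ w)} (hmc : MultClosed μ S)
    {w : W3} (hw : ∀ i, inCyl μ i w) (j : Fin 3) :
    label μ S w ≤ label μ S (w + eW j) := by
  intro g hg
  have hmem : mapV μ j w (stdMap μ w g) ∈ S (w + eW j) := hmc w j ⟨_, hg, rfl⟩
  rwa [← LinearMap.comp_apply, mapV_comp_stdMap μ hw] at hmem

lemma label_eq_label_add {S : ∀ w : W3, Submodule ℂ (VF μ w)} (hmc : MultClosed μ S)
    {w : W3} {j : Fin 3} (hw : typeIII μ w) (hw' : typeIII μ (w + eW j))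
    (hS : Module.finrank ℂ (S (w + eW j)) ≤ Module.finrank ℂ (S w)) :
    label μ S w = label μ S (w + eW j) := by
  apply Submodule.eq_of_le_of_finrank_le (label_le_label_add μ hmc (inCyl_of_typeIII μ hw) j)
  rwa [finrank_label μ (inCyl_of_typeIII μ hw), finrank_label μ (inCyl_of_typeIII μ hw')]

lemma Nat.apply_zero_eq_apply_of_forall_lt {β : Type*} {g : ℕ → β} {n : ℕ}
    (h : ∀ k < n, g k = g (k + 1)) : g 0 = g n := by
  induction n with
  | zero => rfl
  | succ n ih => exact (ih fun k hk => h k (by omega)).trans (h n n.lt_succ_self)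

theorem adjacent_labelled_boxes_same_label
    (S : ∀ w : W3, Submodule ℂ (VF μ w))
    (hmc : MultClosed μ S) :
    (∀ (w : W3) (j : Fin 3), typeIII μ w → typeIII μ (w + eW j) →
      Module.finrank ℂ (S w) = 2 → Module.finrank ℂ (S (w + eW j)) = 2 →
      label μ S w = label μ S (w + eW j)) ∧
    (∀ (f : ℕ → W3) (n : ℕ),
      (∀ k < n, ∃ j : Fin 3, f (k + 1) = f k + eW j ∨ f k = f (k + 1) + eW j) →
      (∀ k ≤ n, typeIII μ (f k) ∧ Module.finrank ℂ (S (f k)) = 2) →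
      label μ S (f 0) = label μ S (f n)) := by
  refine ⟨fun w j hw hw' hS hS' => label_eq_label_add μ hmc hw hw' (hS'.trans hS.symm).le, ?_⟩
  intro f n hpath hbox
  refine Nat.apply_zero_eq_apply_of_forall_lt (g := fun k => label μ S (f k)) fun k hk => ?_
  obtain ⟨hk₀, hS₀⟩ := hbox k hk.le
  obtain ⟨hk₁, hS₁⟩ := hbox (k + 1) hk
  obtain ⟨j, hj | hj⟩ := hpath k hk
  · rw [hj] at hk₁ hS₁ ⊢
    exact label_eq_label_add μ hmc hk₀ hk₁ (hS₁.trans hS₀.symm).le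
  · rw [hj] at hk₀ hS₀ ⊢
    exact (label_eq_label_add μ hmc hk₁ hk₀ (hS₀.trans hS₁.symm).le).symm

end
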